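/- arXiv:1605.05822 — 4 statements merged into one kernel-verified Lean document; each statement's English description precedes it below -/
import Mathlib

section
/- In the basic game, a Nash equilibrium always exists: there is a subset I* of {1,...,N} such that U_i(I*) ≥ 0 for every i ∈ I* and U_j(I* ∪ {j}) ≤ 0 for every j ∉ I*. -/
/-!
Writing `C = V - x·d`, scientist `i` is content in `I` iff `F·h_I ≤ C·h_i`, and an outsider `j`
stays out iff `C·h_j ≤ F·(h_j + h_I)`. Take the longest run `{0, …, k-1}` of the most capable
scientists in which everybody is content. If `k < N`, adding scientist `k` makes some member `i`
discontent, so `(C - F)·h_i < F·h_I` since `h_k ≤ h_i`; every outsider `j` has `h_j ≤ h_i`,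
and hence does not want to enter either.
-/

open Finset

/-- Expected payoff of scientist `i` in the basic game when the participating set is `I`:
`U_i(I) = V·h_i/h_I − h_i·x·d/h_I − F`. -/
noncomputable def payoff {N : ℕ} (h : Fin N → ℝ) (V d x F : ℝ)
    (I : Finset (Fin N)) (i : Fin N) : ℝ :=
  V * h i / (∑ j ∈ I, h j) - h i * x * d / (∑ j ∈ I, h j) - F

/-- `I` is a Nash equilibrium of the basic game. -/
def IsEquil {N : ℕ} (h : Fin N → ℝ) (V d x F : ℝ) (I : Finset (Fin N)) : Prop :=
  (∀ i ∈ I, 0 ≤ payoff h V d x F I i) ∧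
  (∀ j ∉ I, payoff h V d x F (insert j I) j ≤ 0)

section BasicGame

lemma mul_le_mul_add_of_lt {C F a b t s : ℝ} (hF : 0 ≤ F) (hs : 0 ≤ s) (hb : 0 ≤ b)
    (hba : b ≤ a) (hta : t ≤ a) (hlt : C * a < F * (t + s)) : C * b ≤ F * (b + s) := by
  have hgap : (C - F) * a < F * s := by nlinarith
  rcases le_or_gt C F with hle | hgt
  · nlinarith
  · nlinarith

variable {N : ℕ} (h : Fin N → ℝ)

lemma payoff_eq (V d x F : ℝ) (I : Finset (Fin N)) (i : Fin N) :
    payoff h V d x F I i = (V - x * d) * h i / ∑ j ∈ I, h j - F := by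
  unfold payoff
  ring

lemma payoff_nonneg_iff {V d x F : ℝ} {I : Finset (Fin N)} (hI : 0 < ∑ j ∈ I, h j)
    (i : Fin N) :
    0 ≤ payoff h V d x F I i ↔ F * ∑ j ∈ I, h j ≤ (V - x * d) * h i := by
  rw [payoff_eq, sub_nonneg, le_div_iff₀ hI, mul_comm]

lemma payoff_insert_nonpos_iff {V d x F : ℝ} {I : Finset (Fin N)} {j : Fin N} (hj : j ∉ I)
    (hI : 0 < h j + ∑ i ∈ I, h i) :
    payoff h V d x F (insert j I) j ≤ 0 ↔ (V - x * d) * h j ≤ F * (h j + ∑ i ∈ I, h i) := by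
  rw [payoff_eq, sum_insert hj, sub_nonpos, div_le_iff₀ hI, mul_comm F]

/-- The `k` scientists of largest capital, when `h` is antitone. -/
def initialSegment (N k : ℕ) : Finset (Fin N) :=
  univ.filter fun i => (i : ℕ) < k

@[simp]
lemma mem_initialSegment {k : ℕ} {i : Fin N} : i ∈ initialSegment N k ↔ (i : ℕ) < k := by
  simp [initialSegment]

lemma sum_initialSegment_succ {k : ℕ} (hk : k < N) :
    ∑ i ∈ initialSegment N (k + 1), h i = h ⟨k, hk⟩ + ∑ i ∈ initialSegment N k, h i := by
  have hseg : initialSegment N (k + 1) = insert ⟨k, hk⟩ (initialSegment N k) := by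
    ext i
    simp only [mem_initialSegment, mem_insert, Fin.ext_iff]
    omega
  rw [hseg, sum_insert (by simp)]

variable (C F : ℝ)

/-- The member condition of an equilibrium with denominators cleared, for `C = V - x·d`. -/
def AllContent (I : Finset (Fin N)) : Prop :=
  ∀ i ∈ I, F * ∑ j ∈ I, h j ≤ C * h i

lemma exists_allContent_and_entry_unprofitable (hnonneg : ∀ i, 0 ≤ h i) (hanti : Antitone h)
    (hF : 0 ≤ F) :
    ∃ I : Finset (Fin N), AllContent h C F I ∧
      ∀ j ∉ I, C * h j ≤ F * (h j + ∑ i ∈ I, h i) := by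
  classical
  set k := Nat.findGreatest (fun k => AllContent h C F (initialSegment N k)) N
  have hcontent : AllContent h C F (initialSegment N k) :=
    Nat.findGreatest_spec (P := fun k => AllContent h C F (initialSegment N k)) (Nat.zero_le N)
      (fun i hi => absurd (mem_initialSegment.1 hi) (Nat.not_lt_zero _))
  refine ⟨initialSegment N k, hcontent, fun j hj => ?_⟩
  have hkj : k ≤ j := by simpa using hj
  have hkN : k < N := hkj.trans_lt j.isLt
  have hnext : ¬ AllContent h C F (initialSegment N (k + 1)) :=
    Nat.findGreatest_is_greatest (Nat.lt_succ_self k) hkN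
  obtain ⟨i, hi, hdiscontent⟩ : ∃ i ∈ initialSegment N (k + 1),
      C * h i < F * ∑ l ∈ initialSegment N (k + 1), h l := by
    simpa [AllContent] using hnext
  rw [sum_initialSegment_succ h hkN] at hdiscontent
  have hik : (i : ℕ) ≤ k := Nat.lt_succ_iff.1 (mem_initialSegment.1 hi)
  exact mul_le_mul_add_of_lt hF (sum_nonneg fun l _ => hnonneg l) (hnonneg j)
    (hanti (Fin.le_def.2 (hik.trans hkj))) (hanti (Fin.le_def.2 hik)) hdiscontent

end BasicGame

theorem nash_equilibrium_exists_general (N : ℕ) (h : Fin N → ℝ)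
    (hpos : ∀ i, 0 < h i) (hdesc : ∀ i j : Fin N, i ≤ j → h j ≤ h i)
    (V d x F : ℝ) (hF : 0 < F) :
    ∃ Istar : Finset (Fin N), IsEquil h V d x F Istar := by
  obtain ⟨I, hcontent, hstay⟩ := exists_allContent_and_entry_unprofitable h (V - x * d) F
    (fun i => (hpos i).le) (fun i j hij => hdesc i j hij) hF.le
  refine ⟨I, fun i hi => ?_, fun j hj => ?_⟩
  · exact (payoff_nonneg_iff h (sum_pos (fun l _ => hpos l) ⟨i, hi⟩) i).2 (hcontent i hi)
  · have hI : 0 < h j + ∑ i ∈ I, h i := add_pos_of_pos_of_nonneg (hpos j) (sum_nonneg fun l _ => (hpos l).le)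
    exact (payoff_insert_nonpos_iff h hj hI).2 (hstay j hj)

/-- In the basic game, a Nash equilibrium always exists. -/
theorem nash_equilibrium_exists (N : ℕ) (h : Fin N → ℝ)
    (hpos : ∀ i, 0 < h i) (hdesc : ∀ i j : Fin N, i ≤ j → h j ≤ h i)
    (V d x F : ℝ) (hV : 0 < V) (hd : 0 < d) (hx : 0 < x) (hF : 0 < F) :
    ∃ Istar : Finset (Fin N), IsEquil h V d x F Istar :=
  nash_equilibrium_exists_general N h hpos hdesc V d x F hF
end

section
/- Let h_i, h_K, h_L, d_k, d_l, V_k, V_l, x be positive reals, Δ and R reals, and P ∈ [0,1]. Define s = (h_i/(h_i+h_K))·(V_k − d_k·x), U0 = V_l + Δ + s + R, α = (h_i/d_k)/((h_i/d_k)+(h_L/d_l)), β = (h_L/d_l)/((h_i/d_k)+(h_L/d_l)), and B = (1−P)·U0 + P·(α·(V_l + Δ + V_k + R) + β·(Δ + s + R)). Then U0 − B = (P/((h_i/d_k)+(h_L/d_l)))·( V_l·h_L/d_l − (h_i/d_k)·(V_k·h_K + x·d_k·h_i)/(h_i+h_K) ); in particular, if V_l·h_L/d_l − (h_i/d_k)·(V_k·h_K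 + x·d_k·h_i)/(h_i+h_K) ≥ 0 then U0 ≥ B. -/
/-! `B` moves `U0`, with weight `P`, towards the `α, β`-average of `A = V_l + Δ + V_k + R` and
`C = Δ + s + R`, and `α + β = 1`. Hence `U0 - B = P (α (U0 - A) + β (U0 - C))`, where
`U0 - C = V_l` and `U0 - A = s - V_k = -(V_k h_K + x d_k h_i) / (h_i + h_K)`. -/

theorem self_sub_lerp_weightedAvg_eq {K : Type*} [Field K] {a b : K} (hab : a + b ≠ 0)
    (P U A C : K) :
    U - ((1 - P) * U + P * (a / (a + b) * A + b / (a + b) * C)) =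
      P / (a + b) * (a * (U - A) + b * (U - C)) := by
  field_simp
  ring

theorem div_add_mul_sub_self {K : Type*} [Field K] {h h' : K} (hh : h + h' ≠ 0) (V d x : K) :
    h / (h + h') * (V - d * x) - V = -((V * h' + x * d * h) / (h + h')) := by
  field_simp
  ring

theorem publish_immediately_bound_general
    (h_i h_K h_L d_k d_l V_k V_l x : ℝ) (Δ R : ℝ) (P : ℝ)
    (hhi : 0 < h_i) (hhK : 0 < h_K) (hhL : 0 < h_L)
    (hdk : 0 < d_k) (hdl : 0 < d_l)
    (hP0 : 0 ≤ P) :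
    (V_l + Δ + (h_i / (h_i + h_K)) * (V_k - d_k * x) + R) -
      ((1 - P) * (V_l + Δ + (h_i / (h_i + h_K)) * (V_k - d_k * x) + R) +
        P * ((h_i / d_k / (h_i / d_k + h_L / d_l)) * (V_l + Δ + V_k + R) +
          (h_L / d_l / (h_i / d_k + h_L / d_l)) *
            (Δ + (h_i / (h_i + h_K)) * (V_k - d_k * x) + R))) =
      (P / (h_i / d_k + h_L / d_l)) *
        (V_l * h_L / d_l - (h_i / d_k) * ((V_k * h_K + x * d_k * h_i) / (h_i + h_K))) ∧
    (0 ≤ V_l * h_L / d_l - (h_i / d_k) * ((V_k * h_K + x * d_k * h_i) / (h_i + h_K)) →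
      (1 - P) * (V_l + Δ + (h_i / (h_i + h_K)) * (V_k - d_k * x) + R) +
        P * ((h_i / d_k / (h_i / d_k + h_L / d_l)) * (V_l + Δ + V_k + R) +
          (h_L / d_l / (h_i / d_k + h_L / d_l)) *
            (Δ + (h_i / (h_i + h_K)) * (V_k - d_k * x) + R)) ≤
      V_l + Δ + (h_i / (h_i + h_K)) * (V_k - d_k * x) + R) := by
  have hab : 0 < h_i / d_k + h_L / d_l := by positivity
  have hdiff := self_sub_lerp_weightedAvg_eq hab.ne' P
    (V_l + Δ + (h_i / (h_i + h_K)) * (V_k - d_k * x) + R) (V_l + Δ + V_k + R)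
    (Δ + (h_i / (h_i + h_K)) * (V_k - d_k * x) + R)
  have hshare := div_add_mul_sub_self (by positivity : h_i + h_K ≠ 0) V_k d_k x
  have hgap := hdiff.trans <| congrArg (P / (h_i / d_k + h_L / d_l) * ·) <|
    show h_i / d_k * (_ - (V_l + Δ + V_k + R)) + h_L / d_l * _ =
      V_l * h_L / d_l - (h_i / d_k) * ((V_k * h_K + x * d_k * h_i) / (h_i + h_K)) by
    linear_combination (h_i / d_k) * hshare
  refine ⟨hgap, fun hD => sub_nonneg.mp ?_⟩
  rw [hgap]
  exact mul_nonneg (div_nonneg hP0 hab.le) hD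

/-- key algebraic step in the proof that the public sharing strategy
profile is an equilibrium. `U0` is the payoff of publishing immediately; `B` is an
upper bound on the payoff of delaying publication. -/
theorem publish_immediately_bound
    (h_i h_K h_L d_k d_l V_k V_l x : ℝ) (Δ R : ℝ) (P : ℝ)
    (hhi : 0 < h_i) (hhK : 0 < h_K) (hhL : 0 < h_L)
    (hdk : 0 < d_k) (hdl : 0 < d_l) (hVk : 0 < V_k) (hVl : 0 < V_l) (hx : 0 < x)
    (hP0 : 0 ≤ P) (hP1 : P ≤ 1) :
    (V_l + Δ + (h_i / (h_i + h_K)) * (V_k - d_k * x) + R) -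
      ((1 - P) * (V_l + Δ + (h_i / (h_i + h_K)) * (V_k - d_k * x) + R) +
        P * ((h_i / d_k / (h_i / d_k + h_L / d_l)) * (V_l + Δ + V_k + R) +
          (h_L / d_l / (h_i / d_k + h_L / d_l)) *
            (Δ + (h_i / (h_i + h_K)) * (V_k - d_k * x) + R))) =
      (P / (h_i / d_k + h_L / d_l)) *
        (V_l * h_L / d_l - (h_i / d_k) * ((V_k * h_K + x * d_k * h_i) / (h_i + h_K))) ∧
    (0 ≤ V_l * h_L / d_l - (h_i / d_k) * ((V_k * h_K + x * d_k * h_i) / (h_i + h_K)) →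
      (1 - P) * (V_l + Δ + (h_i / (h_i + h_K)) * (V_k - d_k * x) + R) +
        P * ((h_i / d_k / (h_i / d_k + h_L / d_l)) * (V_l + Δ + V_k + R) +
          (h_L / d_l / (h_i / d_k + h_L / d_l)) *
            (Δ + (h_i / (h_i + h_K)) * (V_k - d_k * x) + R)) ≤
      V_l + Δ + (h_i / (h_i + h_K)) * (V_k - d_k * x) + R) :=
  publish_immediately_bound_general h_i h_K h_L d_k d_l V_k V_l x Δ R P hhi hhK hhL hdk hdl hP0
end

section
/- The socially optimal participating group is unique and consists of top-capital scientists: letting i^e = max{ i : W(i) − W(i−1) ≥ 0 } (with W(0) = 0), the group I^e = {1,...,i^e} satisfies W(I') ≤ W(I^e) for every subset I' ⊆ {1,...,N}. -/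
open Finset

/-- Expected social welfare when the participating set is `I`:
`W(I) = (V̂/r)·h_I/(h_I + d·r) − x̂·d·h_I/(h_I + d·r) − |I|·F̂`. -/
noncomputable def welfare {N : ℕ} (h : Fin N → ℝ) (Vhat r xhat d Fhat : ℝ)
    (I : Finset (Fin N)) : ℝ :=
  (Vhat / r) * (∑ j ∈ I, h j) / ((∑ j ∈ I, h j) + d * r)
    - xhat * d * (∑ j ∈ I, h j) / ((∑ j ∈ I, h j) + d * r) - I.card * Fhat

/-- The group `{1,…,i}` of the `i` scientists with the largest capital (0-indexed:
indices `< i`). -/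
def topGroup (N : ℕ) (i : ℕ) : Finset (Fin N) :=
  Finset.univ.filter (fun j : Fin N => (j : ℕ) < i)

/-
Because the benefit `A·S/(S + c)` (with `A = V̂/r − x̂·d`, `c = d·r`) is increasing in the
total capital `S`, the best group of a given size `k` is the group of the `k` top scientists.
Along the top groups the marginal welfare of the `k`-th scientist is
`A·c·h_k / ((H_{k-1} + c)(H_k + c)) − F̂`, which decreases in `k` because `h_k` decreases and
`H_k` increases; so welfare increases up to `i^e` and decreases after it.
-/

lemma Finset.sum_le_sum_of_card_eq_of_forall_le {ι M : Type*} [AddCommMonoid M] [LinearOrder M]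
    [IsOrderedAddMonoid M] {s t : Finset ι} {f : ι → M} (hst : #s = #t)
    (hle : ∀ i ∈ s, ∀ j ∈ t, f i ≤ f j) : ∑ i ∈ s, f i ≤ ∑ j ∈ t, f j := by
  rcases s.eq_empty_or_nonempty with rfl | hs
  · simp [card_eq_zero.mp hst.symm]
  obtain ⟨i₀, hi₀, hmax⟩ := s.exists_max_image f hs
  calc ∑ i ∈ s, f i ≤ #s • f i₀ := sum_le_card_nsmul _ _ _ hmax
    _ = #t • f i₀ := by rw [hst]
    _ ≤ ∑ j ∈ t, f j := card_nsmul_le_sum _ _ _ (hle i₀ hi₀)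

@[simp]
lemma mem_topGroup {N k : ℕ} {j : Fin N} : j ∈ topGroup N k ↔ (j : ℕ) < k := by
  simp [topGroup]

lemma card_topGroup {N k : ℕ} (hk : k ≤ N) : #(topGroup N k) = k := by
  rw [topGroup, Fin.card_filter_val_lt, min_eq_right hk]

lemma topGroup_mono (N : ℕ) : Monotone (topGroup N) := fun _ _ hjk _ hj ↦
  mem_topGroup.mpr ((mem_topGroup.mp hj).trans_le hjk)

lemma sum_topGroup_succ {N k : ℕ} (h : Fin N → ℝ) (hk : k < N) :
    ∑ j ∈ topGroup N (k + 1), h j = ∑ j ∈ topGroup N k, h j + h ⟨k, hk⟩ := by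
  have hinsert : topGroup N (k + 1) = insert ⟨k, hk⟩ (topGroup N k) := by
    ext j
    simp only [mem_topGroup, mem_insert, Fin.ext_iff]
    omega
  rw [hinsert, sum_insert (by simp), add_comm]

lemma sum_le_sum_topGroup {N : ℕ} {h : Fin N → ℝ} (hh : Antitone h) (I : Finset (Fin N)) :
    ∑ j ∈ I, h j ≤ ∑ j ∈ topGroup N #I, h j := by
  classical
  have hcard : #I = #(topGroup N #I) := by
    rw [card_topGroup (card_finset_fin_le I)]
  rw [← sum_sdiff_le_sum_sdiff]
  refine sum_le_sum_of_card_eq_of_forall_le (card_sdiff_comm hcard) fun i hi j hj ↦ hh ?_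
  simp only [mem_sdiff, mem_topGroup, not_lt] at hi hj
  exact Fin.le_def.mpr (by omega)

noncomputable def netBenefit (A c S : ℝ) : ℝ := A * S / (S + c)

section netBenefit

variable {A c : ℝ}

lemma netBenefit_le_netBenefit (hA : 0 ≤ A) (hc : 0 < c) {S T : ℝ} (hS : 0 ≤ S)
    (hST : S ≤ T) : netBenefit A c S ≤ netBenefit A c T := by
  unfold netBenefit
  rw [div_le_div_iff₀ (by linarith) (by linarith)]
  nlinarith [mul_le_mul_of_nonneg_left hST (mul_nonneg hA hc.le)]

lemma netBenefit_add_sub (hc : 0 < c) {S x : ℝ} (hS : 0 ≤ S) (hx : 0 ≤ x) :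
    netBenefit A c (S + x) - netBenefit A c S = A * c * x / ((S + c) * (S + x + c)) := by
  unfold netBenefit
  field_simp [(by linarith : S + c ≠ 0), (by linarith : S + x + c ≠ 0)]
  ring

lemma netBenefit_add_sub_le (hA : 0 ≤ A) (hc : 0 < c) {S T x x' : ℝ} (hS : 0 ≤ S)
    (hST : S ≤ T) (hx' : 0 ≤ x') (hx : x' ≤ x) :
    netBenefit A c (T + x') - netBenefit A c T ≤ netBenefit A c (S + x) - netBenefit A c S := by
  have hT : 0 ≤ T := hS.trans hST
  calc netBenefit A c (T + x') - netBenefit A c T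
      ≤ netBenefit A c (T + x) - netBenefit A c T := by
        gcongr
        exact netBenefit_le_netBenefit hA hc (by linarith) (by linarith)
    _ ≤ netBenefit A c (S + x) - netBenefit A c S := by
        have hx0 : 0 ≤ x := hx'.trans hx
        rw [netBenefit_add_sub hc hT hx0, netBenefit_add_sub hc hS hx0]
        gcongr

end netBenefit

section welfare

variable {N : ℕ} (h : Fin N → ℝ) (Vhat r xhat d Fhat : ℝ)

lemma welfare_eq_netBenefit (I : Finset (Fin N)) :
    welfare h Vhat r xhat d Fhat I
      = netBenefit (Vhat / r - xhat * d) (d * r) (∑ j ∈ I, h j) - #I * Fhat := by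
  unfold welfare netBenefit
  ring

variable {h Vhat r xhat d Fhat}

lemma welfare_le_welfare_topGroup_card (hh : Antitone h) (hpos : ∀ i, 0 ≤ h i)
    (hA : 0 ≤ Vhat / r - xhat * d) (hc : 0 < d * r) (I : Finset (Fin N)) :
    welfare h Vhat r xhat d Fhat I ≤ welfare h Vhat r xhat d Fhat (topGroup N #I) := by
  rw [welfare_eq_netBenefit, welfare_eq_netBenefit, card_topGroup (card_finset_fin_le I)]
  gcongr
  exact netBenefit_le_netBenefit hA hc (sum_nonneg fun j _ ↦ hpos j) (sum_le_sum_topGroup hh I)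

lemma welfare_topGroup_succ_sub_le (hh : Antitone h) (hpos : ∀ i, 0 ≤ h i)
    (hA : 0 ≤ Vhat / r - xhat * d) (hc : 0 < d * r) {j k : ℕ} (hjk : j ≤ k) (hk : k < N) :
    welfare h Vhat r xhat d Fhat (topGroup N (k + 1)) - welfare h Vhat r xhat d Fhat (topGroup N k)
      ≤ welfare h Vhat r xhat d Fhat (topGroup N (j + 1))
        - welfare h Vhat r xhat d Fhat (topGroup N j) := by
  simp only [welfare_eq_netBenefit, card_topGroup (Nat.succ_le_of_lt hk), card_topGroup hk.le,
    card_topGroup (hjk.trans_lt hk), card_topGroup (hjk.trans hk.le), sum_topGroup_succ h hk,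
    sum_topGroup_succ h (hjk.trans_lt hk)]
  have hgain := netBenefit_add_sub_le hA hc (sum_nonneg fun i _ ↦ hpos i)
    (sum_le_sum_of_subset_of_nonneg (topGroup_mono N hjk) fun i _ _ ↦ hpos i) (hpos ⟨k, hk⟩)
    (hh (Fin.le_def.mpr hjk : (⟨j, hjk.trans_lt hk⟩ : Fin N) ≤ ⟨k, hk⟩))
  push_cast
  linarith

end welfare

lemma Nat.apply_le_apply_of_unimodal {β : Type*} [Preorder β] {f : ℕ → β} {m n : ℕ}
    (hmn : m ≤ n) (hinc : ∀ k < m, f k ≤ f (k + 1))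
    (hdec : ∀ k, m ≤ k → k < n → f (k + 1) ≤ f k) {k : ℕ} (hk : k ≤ n) : f k ≤ f m := by
  rcases le_total k m with hkm | hmk
  · exact monotoneOn_of_le_add_one Set.ordConnected_Iic (fun a _ _ ha ↦ hinc a ha) hkm
      Set.self_mem_Iic hkm
  · exact antitoneOn_of_add_one_le Set.ordConnected_Icc (fun a _ ha ha' ↦ hdec a ha.1 ha'.2)
      ⟨le_rfl, hmn⟩ ⟨hmk, hk⟩ hmk

theorem socially_optimal_group_general (N : ℕ) (h : Fin N → ℝ)
    (hpos : ∀ i, 0 < h i) (hdesc : ∀ i j : Fin N, i < j → h j < h i)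
    (Vhat r xhat d Fhat : ℝ)
    (hr : 0 < r) (hd : 0 < d)
    (hworth : 0 < Vhat / r - xhat * d)
    (ie : ℕ) (hieN : ie ≤ N)
    (hmem : 0 ≤ welfare h Vhat r xhat d Fhat (topGroup N ie)
      - welfare h Vhat r xhat d Fhat (topGroup N (ie - 1)))
    (hmax : ∀ i : ℕ, 1 ≤ i → i ≤ N →
      0 ≤ welfare h Vhat r xhat d Fhat (topGroup N i)
        - welfare h Vhat r xhat d Fhat (topGroup N (i - 1)) → i ≤ ie) :
    ∀ I' : Finset (Fin N),
      welfare h Vhat r xhat d Fhat I' ≤ welfare h Vhat r xhat d Fhat (topGroup N ie) := by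
  intro I'
  have hh : Antitone h := StrictAnti.antitone fun i j hij ↦ hdesc i j hij
  have hpos' : ∀ i, 0 ≤ h i := fun i ↦ (hpos i).le
  have hc : 0 < d * r := mul_pos hd hr
  refine (welfare_le_welfare_topGroup_card hh hpos' hworth.le hc I').trans ?_
  refine Nat.apply_le_apply_of_unimodal (f := fun k ↦ welfare h Vhat r xhat d Fhat (topGroup N k))
    hieN (fun k hk ↦ ?_) (fun k hk hkN ↦ ?_) (card_finset_fin_le I')
  · have hmarg := welfare_topGroup_succ_sub_le (Fhat := Fhat) hh hpos' hworth.le hc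
      (Nat.le_sub_one_of_lt hk) (by omega : ie - 1 < N)
    rw [Nat.sub_add_cancel (by omega)] at hmarg
    linarith
  · by_contra hlt
    have hle := hmax (k + 1) (by omega) hkN
      (by simp only [Nat.add_sub_cancel]; linarith [not_le.mp hlt])
    omega

/-- Proposition 5: the socially optimal participating group is unique
and equals `I^e = {1,…,i^e}` where `i^e = max{ i : W(i) − W(i−1) ≥ 0 }` (with
`W(0) = 0`): every subset `I'` has `W(I') ≤ W(I^e)`. -/
theorem socially_optimal_group (N : ℕ) (h : Fin N → ℝ)
    (hpos : ∀ i, 0 < h i) (hdesc : ∀ i j : Fin N, i < j → h j < h i)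
    (Vhat r xhat d Fhat : ℝ)
    (hVhat : 0 < Vhat) (hr : 0 < r) (hxhat : 0 < xhat) (hd : 0 < d) (hFhat : 0 < Fhat)
    (hworth : 0 < Vhat / r - xhat * d)
    (ie : ℕ) (hie1 : 1 ≤ ie) (hieN : ie ≤ N)
    (hmem : 0 ≤ welfare h Vhat r xhat d Fhat (topGroup N ie)
      - welfare h Vhat r xhat d Fhat (topGroup N (ie - 1)))
    (hmax : ∀ i : ℕ, 1 ≤ i → i ≤ N →
      0 ≤ welfare h Vhat r xhat d Fhat (topGroup N i)
        - welfare h Vhat r xhat d Fhat (topGroup N (i - 1)) → i ≤ ie) :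
    ∀ I' : Finset (Fin N),
      welfare h Vhat r xhat d Fhat I' ≤ welfare h Vhat r xhat d Fhat (topGroup N ie) :=
  socially_optimal_group_general N h hpos hdesc Vhat r xhat d Fhat hr hd hworth ie hieN hmem hmax
end

section
/- With H_i = Σ_{j=1}^i h_j and H_0 = 0, for every i ≥ 1 the identity H_i/(H_i + d·r) − H_{i−1}/(H_{i−1} + d·r) = h_i·d·r / ((H_i + d·r)(H_{i−1} + d·r)) holds, and consequently the marginal welfare W(i) − W(i−1) is strictly decreasing in i when h_1 > h_2 > ... > h_N > 0 and V̂/r − x̂·d > 0. -/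
/-! The identity is `(a + x)/(a + x + c) − a/(a + c) = x·c/((a + x + c)(a + c))` with
`a = H_{i−1}`, `x = h_i`, `c = d·r`. The welfare difference `W(i) − W(i−1)` is
`(V̂/r − x̂·d)` times this increment, minus `F̂`. Passing from `i` to a later `j`, the numerator
`h` strictly decreases while both factors of the denominator weakly increase, `H` being
monotone. -/

open Finset

/-- `H_i = Σ_{j=1}^i h_j` (0-indexed: sum of `h j` over indices `j < i`), with `H_0 = 0`. -/
noncomputable def capSum {N : ℕ} (h : Fin N → ℝ) (i : ℕ) : ℝ :=
  ∑ j ∈ Finset.univ.filter (fun j : Fin N => (j : ℕ) < i), h j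

/-- `W(i) = (V̂/r)·H_i/(H_i + d·r) − x̂·d·H_i/(H_i + d·r) − i·F̂`, with `W(0) = 0`. -/
noncomputable def Wtop {N : ℕ} (h : Fin N → ℝ) (Vhat r xhat d Fhat : ℝ) (i : ℕ) : ℝ :=
  (Vhat / r) * capSum h i / (capSum h i + d * r)
    - xhat * d * capSum h i / (capSum h i + d * r) - i * Fhat

theorem add_div_add_sub_div_add {K : Type*} [Field K] {a x c : K}
    (hac : a + c ≠ 0) (haxc : a + x + c ≠ 0) :
    (a + x) / (a + x + c) - a / (a + c) = x * c / ((a + x + c) * (a + c)) := by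
  field_simp
  ring

section capSum

variable {N : ℕ} (h : Fin N → ℝ)

theorem capSum_succ {i : ℕ} (hiN : i < N) : capSum h (i + 1) = capSum h i + h ⟨i, hiN⟩ := by
  unfold capSum
  rw [add_comm (∑ j ∈ _, h j), ← sum_insert (by simp)]
  refine sum_congr ?_ fun _ _ => rfl
  ext j
  simp only [mem_filter, mem_insert, mem_univ, true_and, Fin.ext_iff]
  omega

theorem capSum_eq_capSum_pred_add {i : ℕ} (hi1 : 1 ≤ i) (hiN : i ≤ N) :
    capSum h i = capSum h (i - 1) + h ⟨i - 1, Nat.sub_one_lt_of_le hi1 hiN⟩ := by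
  obtain ⟨k, rfl⟩ := Nat.exists_eq_add_of_le' hi1
  exact capSum_succ h (by omega)

variable {h} (hnonneg : ∀ i, 0 ≤ h i)
include hnonneg

theorem capSum_nonneg (i : ℕ) : 0 ≤ capSum h i :=
  sum_nonneg fun j _ => hnonneg j

theorem capSum_mono : Monotone (capSum h) := fun i j hij =>
  sum_le_sum_of_subset_of_nonneg
    (fun a ha => by simp only [mem_filter, mem_univ, true_and] at ha ⊢; omega)
    fun a _ _ => hnonneg a

theorem capSum_add_pos {c : ℝ} (hc : 0 < c) (i : ℕ) : 0 < capSum h i + c := by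
  linarith [capSum_nonneg hnonneg i]

end capSum

theorem capSum_div_sub_capSum_pred_div {N : ℕ} {h : Fin N → ℝ} (hnonneg : ∀ i, 0 ≤ h i)
    {c : ℝ} (hc : 0 < c) {i : ℕ} (hi1 : 1 ≤ i) (hiN : i ≤ N) :
    capSum h i / (capSum h i + c) - capSum h (i - 1) / (capSum h (i - 1) + c) =
      h ⟨i - 1, Nat.sub_one_lt_of_le hi1 hiN⟩ * c /
        ((capSum h i + c) * (capSum h (i - 1) + c)) := by
  have hpred := capSum_add_pos hnonneg hc (i - 1)
  have hcur := capSum_add_pos hnonneg hc i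
  rw [capSum_eq_capSum_pred_add h hi1 hiN] at hcur ⊢
  exact add_div_add_sub_div_add hpred.ne' hcur.ne'

theorem capSum_increment_lt {N : ℕ} {h : Fin N → ℝ} (hnonneg : ∀ i, 0 ≤ h i)
    (hdesc : ∀ i j : Fin N, i < j → h j < h i) {c : ℝ} (hc : 0 < c) {i j : ℕ}
    (hi1 : 1 ≤ i) (hij : i < j) (hjN : j ≤ N) :
    h ⟨j - 1, Nat.sub_one_lt_of_le (Nat.zero_lt_of_lt hij) hjN⟩ * c /
        ((capSum h j + c) * (capSum h (j - 1) + c)) <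
      h ⟨i - 1, Nat.sub_one_lt_of_le hi1 (hij.le.trans hjN)⟩ * c /
        ((capSum h i + c) * (capSum h (i - 1) + c)) := by
  have hnum : h ⟨j - 1, by omega⟩ < h ⟨i - 1, by omega⟩ :=
    hdesc _ _ (Fin.mk_lt_mk.mpr (by omega))
  have hden : (capSum h i + c) * (capSum h (i - 1) + c) ≤
      (capSum h j + c) * (capSum h (j - 1) + c) := by
    refine mul_le_mul ?_ ?_ (capSum_add_pos hnonneg hc _).le (capSum_add_pos hnonneg hc _).le
    · exact add_le_add_left (capSum_mono hnonneg hij.le) c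
    · exact add_le_add_left (capSum_mono hnonneg (by omega)) c
  exact div_lt_div₀ (by gcongr) hden (mul_nonneg (hnonneg _) hc.le)
    (mul_pos (capSum_add_pos hnonneg hc i) (capSum_add_pos hnonneg hc (i - 1)))

theorem Wtop_sub_Wtop_pred {N : ℕ} (h : Fin N → ℝ) (Vhat r xhat d Fhat : ℝ) {k : ℕ}
    (hk1 : 1 ≤ k) :
    Wtop h Vhat r xhat d Fhat k - Wtop h Vhat r xhat d Fhat (k - 1) =
      (Vhat / r - xhat * d) * (capSum h k / (capSum h k + d * r)
        - capSum h (k - 1) / (capSum h (k - 1) + d * r)) - Fhat := by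
  simp only [Wtop, Nat.cast_sub hk1, Nat.cast_one]
  ring

/-- the identity
`H_i/(H_i + d·r) − H_{i−1}/(H_{i−1} + d·r) = h_i·d·r/((H_i + d·r)(H_{i−1} + d·r))`
holds for every `1 ≤ i ≤ N`, and consequently the marginal welfare `W(i) − W(i−1)` is
strictly decreasing in `i`. -/
theorem marginal_welfare_decreasing (N : ℕ) (h : Fin N → ℝ)
    (hpos : ∀ i, 0 < h i) (hdesc : ∀ i j : Fin N, i < j → h j < h i)
    (Vhat r xhat d Fhat : ℝ)
    (hr : 0 < r) (hd : 0 < d)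
    (hworth : 0 < Vhat / r - xhat * d) :
    (∀ i : ℕ, ∀ hi1 : 1 ≤ i, ∀ hiN : i ≤ N,
      capSum h i / (capSum h i + d * r) - capSum h (i - 1) / (capSum h (i - 1) + d * r) =
        h ⟨i - 1, by omega⟩ * (d * r) /
          ((capSum h i + d * r) * (capSum h (i - 1) + d * r))) ∧
    (∀ i j : ℕ, 1 ≤ i → i < j → j ≤ N →
      Wtop h Vhat r xhat d Fhat j - Wtop h Vhat r xhat d Fhat (j - 1) <
        Wtop h Vhat r xhat d Fhat i - Wtop h Vhat r xhat d Fhat (i - 1)) := by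
  have hnonneg : ∀ i, 0 ≤ h i := fun i => (hpos i).le
  have hdr : 0 < d * r := mul_pos hd hr
  have increment := fun (i : ℕ) (hi1 : 1 ≤ i) (hiN : i ≤ N) =>
    capSum_div_sub_capSum_pred_div hnonneg hdr hi1 hiN
  refine ⟨increment, fun i j hi1 hij hjN => ?_⟩
  rw [Wtop_sub_Wtop_pred h _ _ _ _ _ hi1, Wtop_sub_Wtop_pred h _ _ _ _ _ (by omega),
    increment i hi1 (by omega), increment j (by omega) hjN]
  gcongr ?_ - _
  exact mul_lt_mul_of_pos_left (capSum_increment_lt hnonneg hdesc hdr hi1 hij hjN) hworth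
end
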